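/- Let (x, y) be jointly Gaussian real random variables with x ~ N(0,1), y ~ N(0,1), and E[xy] = ρ, and let w be a random variable uniformly distributed on (0, 2π), independent of (x, y). Then for every real t, E[cos(t x + w) cos(t y + w)] = (1/2) e^{-t²(1-ρ)}. In particular, with t = √γ for γ ≥ 0, the quantity 2·E[cos(√γ x + w) cos(√γ y + w)] equals the RBF kernel value e^{-γ(1-ρ)}. -/

import Mathlib

/-!
Averaging over the uniform phase `w` kills the term `cos (t x + t y + 2 w)` of the product-to-sum
formula for `cos (t x + w) * cos (t y + w)`, leaving `cos (t (x - y)) / 2`. Under the bivariate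
Gaussian law, `x - y = (1 - ρ) z₁ - √(1 - ρ²) z₂` is a centred Gaussian of variance `2 (1 - ρ)`,
and the real part of its characteristic function at `t` is `exp (-t² (1 - ρ))`.
-/

open MeasureTheory ProbabilityTheory Real

/-- The bivariate Gaussian distribution on `ℝ × ℝ` with standard normal marginals
and correlation `ρ ∈ [-1, 1]`: the law of `(z₁, ρ z₁ + √(1-ρ²) z₂)` where
`z₁, z₂` are i.i.d. standard normal. -/
noncomputable def biGaussian (ρ : ℝ) : Measure (ℝ × ℝ) :=
  Measure.map (fun z : ℝ × ℝ => (z.1, ρ * z.1 + Real.sqrt (1 - ρ ^ 2) * z.2))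
    ((gaussianReal 0 1).prod (gaussianReal 0 1))

/-- The uniform distribution on the interval `(0, 2π)`. -/
noncomputable def unifTwoPi : Measure ℝ :=
  (ENNReal.ofReal (2 * Real.pi))⁻¹ • volume.restrict (Set.Ioo 0 (2 * Real.pi))

open scoped NNReal

namespace ProbabilityTheory

lemma integral_cos_mul_gaussianReal (μ : ℝ) (v : ℝ≥0) (c : ℝ) :
    ∫ x, cos (c * x) ∂gaussianReal μ v = cos (c * μ) * exp (-(v * c ^ 2 / 2)) := by
  have hint : Integrable (fun x : ℝ => Complex.exp (c * x * Complex.I)) (gaussianReal μ v) :=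
    .of_bound (by fun_prop) 1 (.of_forall fun x => by
      rw [← Complex.ofReal_mul, Complex.norm_exp_ofReal_mul_I])
  calc ∫ x, cos (c * x) ∂gaussianReal μ v
      = ∫ x, (Complex.exp (c * x * Complex.I)).re ∂gaussianReal μ v := by
        simp_rw [← Complex.ofReal_mul, Complex.exp_ofReal_mul_I_re]
    _ = (charFun (gaussianReal μ v) c).re := by
        rw [charFun_apply_real]; exact integral_re hint
    _ = cos (c * μ) * exp (-(v * c ^ 2 / 2)) := by
        rw [charFun_gaussianReal, sub_eq_add_neg, Complex.exp_add, ← Complex.ofReal_mul,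
          show -((v : ℂ) * c ^ 2 / 2) = ((-(v * c ^ 2 / 2) : ℝ) : ℂ) by push_cast; ring,
          ← Complex.ofReal_exp, Complex.re_mul_ofReal, Complex.exp_ofReal_mul_I_re]

lemma map_mul_add_mul_prod_gaussianReal (a b μ₁ μ₂ : ℝ) (v₁ v₂ : ℝ≥0) :
    ((gaussianReal μ₁ v₁).prod (gaussianReal μ₂ v₂)).map (fun z => a * z.1 + b * z.2)
      = gaussianReal (a * μ₁ + b * μ₂)
          (.mk (a ^ 2) (sq_nonneg a) * v₁ + .mk (b ^ 2) (sq_nonneg b) * v₂) := by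
  rw [← gaussianReal_conv_gaussianReal, ← gaussianReal_map_const_mul,
    ← gaussianReal_map_const_mul, Measure.conv,
    Measure.map_prod_map _ _ (by fun_prop) (by fun_prop), Measure.map_map (by fun_prop) (by fun_prop)]
  rfl

end ProbabilityTheory

instance isProbabilityMeasure_biGaussian (ρ : ℝ) : IsProbabilityMeasure (biGaussian ρ) :=
  Measure.isProbabilityMeasure_map (by fun_prop)

lemma biGaussian_map_sub {ρ : ℝ} (hρ : ρ ∈ Set.Icc (-1 : ℝ) 1) :
    (biGaussian ρ).map (fun p => p.1 - p.2) = gaussianReal 0 (2 * (1 - ρ)).toNNReal := by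
  have hs : sqrt (1 - ρ ^ 2) ^ 2 = 1 - ρ ^ 2 := sq_sqrt (by nlinarith [hρ.1, hρ.2])
  rw [biGaussian, Measure.map_map (by fun_prop) (by fun_prop)]
  convert map_mul_add_mul_prod_gaussianReal (1 - ρ) (-sqrt (1 - ρ ^ 2)) 0 0 1 1 using 2
  · ext z
    simp only [Function.comp_apply]
    ring
  · simp
  · ext
    simp only [Real.coe_toNNReal', NNReal.coe_add, NNReal.coe_mk, mul_one, neg_sq, hs]
    rw [max_eq_left (by linarith [hρ.2])]
    ring

instance isProbabilityMeasure_unifTwoPi : IsProbabilityMeasure unifTwoPi := by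
  constructor
  rw [unifTwoPi, Measure.smul_apply, Measure.restrict_apply MeasurableSet.univ,
    Set.univ_inter, Real.volume_Ioo, smul_eq_mul, sub_zero]
  exact ENNReal.inv_mul_cancel (by positivity) ENNReal.ofReal_ne_top

lemma integral_unifTwoPi (f : ℝ → ℝ) :
    ∫ w, f w ∂unifTwoPi = (2 * π)⁻¹ * ∫ w in 0..2 * π, f w := by
  rw [unifTwoPi, integral_smul_measure, intervalIntegral.integral_of_le (by positivity),
    integral_Ioc_eq_integral_Ioo, ENNReal.toReal_inv, ENNReal.toReal_ofReal (by positivity),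
    smul_eq_mul]

lemma integral_cos_add_mul_cos_add_unifTwoPi (a b : ℝ) :
    ∫ w, cos (a + w) * cos (b + w) ∂unifTwoPi = cos (a - b) / 2 := by
  have h (w : ℝ) : cos (a + w) * cos (b + w) = (cos (a - b) + cos (2 * w + (a + b))) / 2 := by
    rw [show a - b = (a + w) - (b + w) by ring, show 2 * w + (a + b) = (a + w) + (b + w) by ring,
      cos_add (a + w), cos_sub (a + w)]
    ring
  have hosc : ∫ w in 0..2 * π, cos (2 * w + (a + b)) = 0 := by
    rw [intervalIntegral.integral_comp_mul_add (fun x => cos x) two_ne_zero, integral_cos,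
      show 2 * (2 * π) + (a + b) = (a + b) + 2 * π + 2 * π by ring, sin_add_two_pi, sin_add_two_pi]
    simp
  simp_rw [integral_unifTwoPi, h]
  rw [intervalIntegral.integral_div,
    intervalIntegral.integral_add (Continuous.intervalIntegrable (by fun_prop) _ _)
      (Continuous.intervalIntegrable (by fun_prop) _ _),
    hosc, intervalIntegral.integral_const, sub_zero, smul_eq_mul, add_zero]
  field_simp

lemma integral_cos_add_mul_cos_add_biGaussian_prod_unifTwoPi {ρ : ℝ}
    (hρ : ρ ∈ Set.Icc (-1 : ℝ) 1) (t : ℝ) :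
    ∫ p, cos (t * p.1.1 + p.2) * cos (t * p.1.2 + p.2) ∂(biGaussian ρ).prod unifTwoPi
      = 1 / 2 * exp (-(t ^ 2) * (1 - ρ)) := by
  have hint : Integrable (fun p : (ℝ × ℝ) × ℝ => cos (t * p.1.1 + p.2) * cos (t * p.1.2 + p.2))
      ((biGaussian ρ).prod unifTwoPi) :=
    .of_bound (by fun_prop) 1 (.of_forall fun p => by
      simpa [abs_mul] using mul_le_one₀ (abs_cos_le_one _) (abs_nonneg _) (abs_cos_le_one _))
  calc _ = ∫ p, cos (t * (p.1 - p.2)) / 2 ∂biGaussian ρ := by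
        rw [integral_prod _ hint]
        simp_rw [integral_cos_add_mul_cos_add_unifTwoPi, mul_sub]
    _ = (∫ u, cos (t * u) ∂gaussianReal 0 (2 * (1 - ρ)).toNNReal) / 2 := by
        rw [integral_div, ← biGaussian_map_sub hρ, integral_map (by fun_prop) (by fun_prop)]
    _ = _ := by
        rw [integral_cos_mul_gaussianReal, Real.coe_toNNReal _ (by linarith [hρ.2]), mul_zero,
          cos_zero, one_mul, show -(2 * (1 - ρ) * t ^ 2 / 2) = -(t ^ 2) * (1 - ρ) by ring]
        ring

theorem integral_cos_add_unif_mul_cos_add_unif_of_biGaussian_general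
    {Ω : Type*} [MeasurableSpace Ω] (P : Measure Ω)
    (X Y W : Ω → ℝ) {ρ : ℝ} (hρ : ρ ∈ Set.Icc (-1 : ℝ) 1)
    (hXYW : Measure.map (fun ω => ((X ω, Y ω), W ω)) P
      = (biGaussian ρ).prod unifTwoPi) :
    (∀ t : ℝ, ∫ ω, Real.cos (t * X ω + W ω) * Real.cos (t * Y ω + W ω) ∂P
        = (1 / 2) * Real.exp (-(t ^ 2) * (1 - ρ))) ∧
    (∀ γ : ℝ, 0 ≤ γ →
      2 * ∫ ω, Real.cos (Real.sqrt γ * X ω + W ω)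
            * Real.cos (Real.sqrt γ * Y ω + W ω) ∂P
        = Real.exp (-γ * (1 - ρ))) := by
  have hXYW_meas : AEMeasurable (fun ω => ((X ω, Y ω), W ω)) P :=
    aemeasurable_of_map_neZero (by rw [hXYW]; infer_instance)
  have key (t : ℝ) : ∫ ω, cos (t * X ω + W ω) * cos (t * Y ω + W ω) ∂P
      = 1 / 2 * exp (-(t ^ 2) * (1 - ρ)) := by
    rw [← integral_cos_add_mul_cos_add_biGaussian_prod_unifTwoPi hρ t, ← hXYW,
      integral_map hXYW_meas (by fun_prop)]
  refine ⟨key, fun γ hγ => ?_⟩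
  rw [key, sq_sqrt hγ]
  ring

/-- Let `(x, y)` be jointly Gaussian with `x ~ N(0,1)`, `y ~ N(0,1)` and
`E[x y] = ρ`, and let `w` be uniform on `(0, 2π)` and independent of `(x, y)`
(i.e. the joint law of `((x, y), w)` is the product of the bivariate Gaussian
with standard marginals and correlation `ρ` with the uniform law on `(0, 2π)`).
Then for every real `t`, `E[cos(t x + w) cos(t y + w)] = (1/2) e^{-t²(1-ρ)}`;
in particular, for `t = √γ` with `γ ≥ 0`,
`2 E[cos(√γ x + w) cos(√γ y + w)]` equals the RBF kernel value `e^{-γ(1-ρ)}`. -/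
theorem integral_cos_add_unif_mul_cos_add_unif_of_biGaussian
    {Ω : Type*} [MeasurableSpace Ω] (P : Measure Ω) [IsProbabilityMeasure P]
    (X Y W : Ω → ℝ) {ρ : ℝ} (hρ : ρ ∈ Set.Icc (-1 : ℝ) 1)
    (hXYW : Measure.map (fun ω => ((X ω, Y ω), W ω)) P
      = (biGaussian ρ).prod unifTwoPi) :
    (∀ t : ℝ, ∫ ω, Real.cos (t * X ω + W ω) * Real.cos (t * Y ω + W ω) ∂P
        = (1 / 2) * Real.exp (-(t ^ 2) * (1 - ρ))) ∧
    (∀ γ : ℝ, 0 ≤ γ →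
      2 * ∫ ω, Real.cos (Real.sqrt γ * X ω + W ω)
            * Real.cos (Real.sqrt γ * Y ω + W ω) ∂P
        = Real.exp (-γ * (1 - ρ))) :=
  integral_cos_add_unif_mul_cos_add_unif_of_biGaussian_general P X Y W hρ hXYW
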